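/- With the purely imaginary parameter setting of the context, the following identities hold: i·ζ − 2λ0 − Σ_{j=1}^n a_j²/(i·ζ + b_j) = 0; 1 + Σ_{j=1}^n a_j²/(i·ζ + b_j)² = 0; and Σ_{j=1}^n a_j²/(i·ζ + b_j)^{k+1} = 0 for every integer k with 2 ≤ k ≤ n. -/

import Mathlib

/-!
For `λ0 = i y` we have `b_j = ζ cot ω_j` and `a_j² = b_j² + ζ²`, so `a_j² / (iζ + b_j) = b_j - iζ`;
the first identity is then `(n + 1) ζ = 2 y` together with `Σ_j cot ω_j = 0`, which follows from
the symmetry `ω_{n+1-j} = π - ω_j`.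

For the higher powers put `X_j = (b_j - iζ) / (b_j + iζ) = exp (-2 i ω_j)`, so the `X_j` are the
`(n+1)`-st roots of unity other than `1`, and
`a_j² / (iζ + b_j)^(q+2) · (2iζ)^q = X_j (1 - X_j)^q`.
The polynomial `X (1 - X)^q` has degree `q + 1 ≤ n` and no constant term, so its values at all
`(n+1)`-st roots of unity sum to `0`; removing the root `1`, whose value is `0^q`, leaves `-0^q`.
-/

open Complex Matrix Finset

noncomputable section

/-- Index type for `(n+1)×(n+1)` matrices: a `1`-block plus an `n`-block. -/
abbrev Idx (n : ℕ) := Fin 1 ⊕ Fin n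

/-- `ζ = 2·Im(λ0)/(n+1)`. -/
def zeta (n : ℕ) (l0 : ℂ) : ℝ := 2 * l0.im / (n + 1)

/-- `ω_j = jπ/(n+1)`. -/
def om (n j : ℕ) : ℝ := j * Real.pi / (n + 1)

/-- `a_j = ζ·csc(ω_j)` for `j = 1,…,n` (indexed by `j : Fin n` as `j+1`). -/
def aa (n : ℕ) (l0 : ℂ) (j : Fin n) : ℝ := zeta n l0 / Real.sin (om n ((j : ℕ) + 1))

/-- `b_j = ζ·cot(ω_j) − 2·Re(λ0)` for `j = 1,…,n`. -/
def bb (n : ℕ) (l0 : ℂ) (j : Fin n) : ℝ :=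
  zeta n l0 * (Real.cos (om n ((j : ℕ) + 1)) / Real.sin (om n ((j : ℕ) + 1))) - 2 * l0.re

/-- `z0 = 2·Re(λ0) + i·ζ`. -/
def zz0 (n : ℕ) (l0 : ℂ) : ℂ := 2 * l0.re + Complex.I * zeta n l0

open Polynomial

theorem IsPrimitiveRoot.geom_sum_pow_eq_zero {R : Type*} [CommRing R] [IsDomain R] {w : R}
    {N k : ℕ} (hw : IsPrimitiveRoot w N) (hk : 0 < k) (hkN : k < N) :
    ∑ i ∈ range N, (w ^ k) ^ i = 0 := by
  refine eq_zero_of_ne_zero_of_mul_left_eq_zero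
    (sub_ne_zero_of_ne (hw.pow_ne_one_of_pos_of_lt hk.ne' hkN).symm) ?_
  rw [mul_neg_geom_sum, ← pow_mul, mul_comm, pow_mul, hw.pow_eq_one, one_pow, sub_self]

theorem IsPrimitiveRoot.sum_range_eval_pow {R : Type*} [CommRing R] [IsDomain R] {w : R} {N : ℕ}
    (hw : IsPrimitiveRoot w N) {p : R[X]} (hp : p.natDegree < N) :
    ∑ i ∈ range N, p.eval (w ^ i) = N * p.coeff 0 := by
  have hpow (i k : ℕ) : (w ^ i) ^ k = (w ^ k) ^ i := by rw [← pow_mul, ← pow_mul, mul_comm]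
  simp only [eval_eq_sum_range' hp]
  rw [sum_comm, sum_eq_single_of_mem 0 (mem_range.2 (hp.trans_le' (Nat.zero_le _)))]
  · simp [mul_comm]
  · intro k hk hk0
    rw [← mul_sum, sum_congr rfl fun i _ => hpow i k,
      hw.geom_sum_pow_eq_zero (Nat.pos_of_ne_zero hk0) (mem_range.1 hk), mul_zero]

theorem IsPrimitiveRoot.sum_pow_succ_mul_one_sub_pow {R : Type*} [CommRing R] [IsDomain R]
    {w : R} {n q : ℕ} (hw : IsPrimitiveRoot w (n + 1)) (hq : q + 1 ≤ n) :
    ∑ j : Fin n, w ^ ((j : ℕ) + 1) * (1 - w ^ ((j : ℕ) + 1)) ^ q = -0 ^ q := by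
  have hdeg : ((X : R[X]) * (1 - X) ^ q).natDegree < n + 1 := by
    refine Nat.lt_succ_of_le (le_trans ?_ hq)
    compute_degree
    omega
  have h := hw.sum_range_eval_pow hdeg
  simp only [sum_range_succ', eval_mul, eval_pow, eval_sub, eval_one, eval_X, mul_coeff_zero,
    coeff_X_zero, zero_mul, mul_zero, pow_zero, sub_self, one_mul] at h
  rw [Fin.sum_univ_eq_sum_range (fun j => w ^ (j + 1) * (1 - w ^ (j + 1)) ^ q)]
  linear_combination h

section Field
variable {K : Type*} [Field K] {a b c : K}

theorem sq_div_add_eq_sub (h : a ^ 2 = b ^ 2 - c ^ 2) (hcb : c + b ≠ 0) :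
    a ^ 2 / (c + b) = b - c := by
  rw [div_eq_iff hcb, h]; ring

theorem sq_div_add_pow_add_two_mul (h : a ^ 2 = b ^ 2 - c ^ 2) (hcb : c + b ≠ 0) (q : ℕ) :
    a ^ 2 / (c + b) ^ (q + 2) * (2 * c) ^ q
      = (b - c) / (c + b) * (1 - (b - c) / (c + b)) ^ q := by
  have hX : 1 - (b - c) / (c + b) = 2 * c / (c + b) := by field_simp; ring
  have hsq : a ^ 2 / (c + b) ^ 2 = (b - c) / (c + b) := by field_simp; rw [h]; ring
  rw [hX, ← hsq, div_pow, pow_add]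
  field_simp
end Field

open Complex in
theorem mul_cot_sub_div_eq_exp {z θ : ℂ} (hz : z ≠ 0) (hθ : sin θ ≠ 0) :
    (z * (cos θ / sin θ) - I * z) / (I * z + z * (cos θ / sin θ)) = exp (-(2 * θ) * I) := by
  have hE : cos θ + sin θ * I ≠ 0 := by rw [← exp_mul_I]; exact exp_ne_zero _
  rw [show -(2 * θ) * I = -θ * I - θ * I by ring, exp_sub, exp_mul_I, exp_mul_I, cos_neg, sin_neg,
    div_eq_div_iff _ hE]
  · field_simp
    ring
  · field_simp
    exact div_ne_zero (mul_ne_zero hz (by rwa [add_comm, mul_comm I])) hθ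

theorem sin_om_succ_pos {n : ℕ} (j : Fin n) : 0 < Real.sin (om n ((j : ℕ) + 1)) := by
  apply Real.sin_pos_of_pos_of_lt_pi
  · unfold om; positivity
  · have hj : ((j : ℕ) : ℝ) + 1 < n + 1 := by exact_mod_cast Nat.succ_lt_succ j.2
    rw [om, div_lt_iff₀ (by positivity)]
    push_cast
    nlinarith [Real.pi_pos]

theorem om_add_om {n a b : ℕ} (h : a + b = n + 1) : om n a + om n b = Real.pi := by
  rw [om, om, ← add_div, ← add_mul, ← Nat.cast_add, h]
  push_cast
  field_simp

theorem sum_cos_div_sin_om_succ (n : ℕ) :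
    ∑ j : Fin n, Real.cos (om n ((j : ℕ) + 1)) / Real.sin (om n ((j : ℕ) + 1)) = 0 := by
  have hrev (j : Fin n) : om n ((j.rev : ℕ) + 1) = Real.pi - om n ((j : ℕ) + 1) :=
    eq_sub_of_add_eq (om_add_om (by rw [Fin.val_rev]; omega))
  have h := Equiv.sum_comp Fin.revPerm
    fun j : Fin n => Real.cos (om n ((j : ℕ) + 1)) / Real.sin (om n ((j : ℕ) + 1))
  simp only [Fin.revPerm_apply, hrev, Real.cos_pi_sub, Real.sin_pi_sub, neg_div,
    sum_neg_distrib] at h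
  linarith

theorem zeta_ne_zero {n : ℕ} {l0 : ℂ} (him : l0.im ≠ 0) : zeta n l0 ≠ 0 := by
  unfold zeta; positivity

theorem bb_of_re_eq_zero {n : ℕ} {l0 : ℂ} (hre : l0.re = 0) (j : Fin n) :
    bb n l0 j = zeta n l0 * (Real.cos (om n ((j : ℕ) + 1)) / Real.sin (om n ((j : ℕ) + 1))) := by
  rw [bb, hre, mul_zero, sub_zero]

theorem aa_sq_eq {n : ℕ} {l0 : ℂ} (hre : l0.re = 0) (j : Fin n) :
    (aa n l0 j : ℂ) ^ 2 = (bb n l0 j : ℂ) ^ 2 - (I * zeta n l0) ^ 2 := by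
  have hs : Complex.sin (om n ((j : ℕ) + 1)) ≠ 0 := by
    exact_mod_cast (sin_om_succ_pos j).ne'
  have hpyth := Complex.sin_sq_add_cos_sq (om n ((j : ℕ) + 1))
  rw [aa, bb_of_re_eq_zero hre]
  push_cast
  rw [mul_pow I, I_sq]
  field_simp
  linear_combination -(zeta n l0 : ℂ) ^ 2 * hpyth

theorem I_mul_zeta_add_bb_ne_zero {n : ℕ} {l0 : ℂ} (him : l0.im ≠ 0) (j : Fin n) :
    I * zeta n l0 + (bb n l0 j : ℂ) ≠ 0 := by
  intro h
  exact zeta_ne_zero him (by simpa using congrArg Complex.im h)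

theorem bb_sub_div_I_mul_zeta_add_bb {n : ℕ} {l0 : ℂ} (hre : l0.re = 0) (him : l0.im ≠ 0)
    (j : Fin n) :
    ((bb n l0 j : ℂ) - I * zeta n l0) / (I * zeta n l0 + (bb n l0 j : ℂ))
      = (exp (2 * Real.pi * I / (n + 1 : ℕ)))⁻¹ ^ ((j : ℕ) + 1) := by
  have hs : Complex.sin (om n ((j : ℕ) + 1)) ≠ 0 := by
    exact_mod_cast (sin_om_succ_pos j).ne'
  rw [bb_of_re_eq_zero hre]
  push_cast
  rw [mul_cot_sub_div_eq_exp (ofReal_ne_zero.2 (zeta_ne_zero him)) hs, ← exp_neg,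
    ← exp_nat_mul, om]
  congr 1
  push_cast
  field_simp

theorem sum_sq_div_I_mul_zeta_add_bb {n : ℕ} {l0 : ℂ} (hre : l0.re = 0) (him : l0.im ≠ 0) :
    ∑ j, (aa n l0 j : ℂ) ^ 2 / (I * zeta n l0 + (bb n l0 j : ℂ)) = -(n * (I * zeta n l0)) := by
  have hbb : ∑ j, bb n l0 j = 0 := by
    simp only [bb_of_re_eq_zero hre, ← mul_sum, sum_cos_div_sin_om_succ, mul_zero]
  rw [sum_congr rfl fun j _ =>
      sq_div_add_eq_sub (aa_sq_eq hre j) (I_mul_zeta_add_bb_ne_zero him j),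
    sum_sub_distrib, ← ofReal_sum, hbb]
  simp

theorem sum_sq_div_pow_add_two_mul {n q : ℕ} {l0 : ℂ} (hre : l0.re = 0) (him : l0.im ≠ 0)
    (hq : q + 1 ≤ n) :
    (∑ j, (aa n l0 j : ℂ) ^ 2 / (I * zeta n l0 + (bb n l0 j : ℂ)) ^ (q + 2))
      * (2 * (I * zeta n l0)) ^ q = -0 ^ q := by
  rw [sum_mul, sum_congr rfl fun j _ =>
    sq_div_add_pow_add_two_mul (aa_sq_eq hre j) (I_mul_zeta_add_bb_ne_zero him j) q]
  simp only [bb_sub_div_I_mul_zeta_add_bb hre him]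
  exact (isPrimitiveRoot_exp (n + 1) n.succ_ne_zero).inv.sum_pow_succ_mul_one_sub_pow hq

/-- with the purely imaginary parameter setting, the identities
`iζ − 2λ0 − Σⱼ aⱼ²/(iζ+bⱼ) = 0`, `1 + Σⱼ aⱼ²/(iζ+bⱼ)² = 0`, and
`Σⱼ aⱼ²/(iζ+bⱼ)^{k+1} = 0` for `2 ≤ k ≤ n` hold. -/
theorem stmt7 (n : ℕ) (hn : 1 ≤ n) (l0 : ℂ) (hre : l0.re = 0) (him : l0.im ≠ 0) :
    (Complex.I * zeta n l0 - 2 * l0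
        - ∑ j, (aa n l0 j : ℂ) ^ 2 / (Complex.I * zeta n l0 + (bb n l0 j : ℂ)) = 0) ∧
    (1 + ∑ j, (aa n l0 j : ℂ) ^ 2 / (Complex.I * zeta n l0 + (bb n l0 j : ℂ)) ^ 2 = 0) ∧
    (∀ k : ℕ, 2 ≤ k → k ≤ n →
      ∑ j, (aa n l0 j : ℂ) ^ 2 / (Complex.I * zeta n l0 + (bb n l0 j : ℂ)) ^ (k + 1) = 0) := by
  refine ⟨?_, ?_, fun k hk2 hkn => ?_⟩
  · have hl0 : l0 = l0.im * I := by rw [← re_add_im l0, hre]; simp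
    rw [sum_sq_div_I_mul_zeta_add_bb hre him, zeta]
    push_cast
    field_simp
    linear_combination -2 * (n + 1 : ℂ) * hl0
  · have h := sum_sq_div_pow_add_two_mul hre him (q := 0) hn
    rw [pow_zero, pow_zero, mul_one] at h
    rw [h, add_neg_cancel]
  · obtain ⟨q, rfl⟩ : ∃ q, k = q + 1 := ⟨k - 1, by omega⟩
    have h := sum_sq_div_pow_add_two_mul hre him hkn
    rw [zero_pow (by omega), neg_zero] at h
    have h2Iζ : 2 * (I * zeta n l0) ≠ 0 := by simp [zeta_ne_zero him]
    exact (mul_eq_zero.1 h).resolve_right (pow_ne_zero q h2Iζ)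

end
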